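/- Let Ω ⊂ ℝⁿ be an open set with Lipschitz boundary, 0 ∈ ∂Ω, locally the epigraph of a Lipschitz function ω : B'_ρ → ℝ with ω(0)=0. Assume ⟨x', ∇ω(x')⟩ ≤ ω(x') + u(|x'|) for a.e. x' ∈ B'_ρ, where u : (0,T) → ℝ is a non-decreasing function satisfying (V1) and (V2). Then Ω satisfies the visibility property at 0. -/

import Mathlib

/-! Along each ray `σ ↦ σ • x'` the gradient bound says that `σ ↦ (ω (σ • x') + u t) / σ` has
nonpositive derivative almost everywhere; being absolutely continuous, it is nonincreasing, so
`ω` lies above its chords towards `(0, -u t)`. For almost every `x'` this holds along almost every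
ray (Fubini), and by continuity for every `x'`. In the graph chart near `0`, a segment from
`U_t = (0, -u t)` to a boundary point `(x', ω x')` therefore stays on or below the graph of `ω`,
hence outside `Ω`. -/

open MeasureTheory Metric Set Filter
open scoped Topology ENNReal NNReal RealInnerProductSpace

noncomputable section

abbrev Eucl (n : ℕ) : Type := EuclideanSpace ℝ (Fin n)

/-- Divergence of a vector field on `Eucl n`. -/
def diverg {n : ℕ} (Φ : Eucl n → Eucl n) (x : Eucl n) : ℝ :=
  ∑ i, fderiv ℝ Φ x (EuclideanSpace.single i 1) i

/-- Total variation `|Df|(U)` of `f` on the set `U`, defined by duality with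
compactly supported `C¹` vector fields bounded by one. -/
def totalVariation {n : ℕ} (f : Eucl n → ℝ) (U : Set (Eucl n)) : ℝ≥0∞ :=
  ⨆ Φ : {Φ : Eucl n → Eucl n // ContDiff ℝ 1 Φ ∧ HasCompactSupport Φ ∧
      tsupport Φ ⊆ U ∧ ∀ x, ‖Φ x‖ ≤ 1},
    ENNReal.ofReal (∫ x in U, f x * diverg Φ.1 x)

/-- `f ∈ BV(U)`: `f` is integrable on `U` with finite total variation in `U`. -/
def MemBV {n : ℕ} (f : Eucl n → ℝ) (U : Set (Eucl n)) : Prop :=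
  IntegrableOn f U volume ∧ totalVariation f U < ⊤

/-- `f ∈ BV_loc(Ω)`: `f ∈ BV(Ω ∩ A)` for every bounded open set `A ⊆ ℝⁿ`. -/
def MemBVloc {n : ℕ} (f : Eucl n → ℝ) (Ω : Set (Eucl n)) : Prop :=
  ∀ A : Set (Eucl n), IsOpen A → Bornology.IsBounded A → MemBV f (Ω ∩ A)

/-- Perimeter `P(E;U) = |D1_E|(U)` of a set `E` in `U`. -/
def perim {n : ℕ} (E U : Set (Eucl n)) : ℝ≥0∞ :=
  totalVariation (Set.indicator E fun _ => (1 : ℝ)) U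

/-- `K ⊂⊂ A` : `K` is compactly contained in `A`. -/
def CptIn {n : ℕ} (K A : Set (Eucl n)) : Prop :=
  IsCompact (closure K) ∧ closure K ⊆ A

/-- The minimality gap `Ψ_Ω(f;A)` of a function `f` in `A`, relative to `Ω`. -/
def minGap {n : ℕ} (Ω A : Set (Eucl n)) (f : Eucl n → ℝ) : ℝ≥0∞ :=
  totalVariation f (Ω ∩ A) -
    ⨅ g : {g : Eucl n → ℝ // MemBVloc g Ω ∧ CptIn (tsupport (g - f)) A},
      totalVariation g.1 (Ω ∩ A)

/-- The minimality gap `Ψ_Ω(E;A)` of a set `E` in `A`, relative to `Ω`. -/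
def minGapSet {n : ℕ} (Ω A E : Set (Eucl n)) : ℝ≥0∞ :=
  minGap Ω A (Set.indicator E fun _ => (1 : ℝ))

/-- The point `(x', t) ∈ ℝ^{n+1}` obtained by appending the coordinate `t` to `x' ∈ ℝⁿ`. -/
def snocE {n : ℕ} (x' : Eucl n) (t : ℝ) : Eucl (n+1) :=
  (EuclideanSpace.equiv (Fin (n+1)) ℝ).symm (Fin.snoc (EuclideanSpace.equiv (Fin n) ℝ x') t)

/-- The first `n` coordinates `x'` of a point `x ∈ ℝ^{n+1}`. -/
def initE {n : ℕ} (x : Eucl (n+1)) : Eucl n :=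
  (EuclideanSpace.equiv (Fin n) ℝ).symm (Fin.init (EuclideanSpace.equiv (Fin (n+1)) ℝ x))

/-- The last coordinate of a point `x ∈ ℝ^{n+1}`. -/
def lastE {n : ℕ} (x : Eucl (n+1)) : ℝ := x (Fin.last n)

/-- Conditions (V1)–(V2) for a visibility function: `u ∈ C¹([0,T))` (with derivative
`u'`), `u(0) = u'(0) = 0`, `0 ≤ u' ≤ 1/2`, and
`γ_u(t) = t⁻¹ sup_{0<s≤t} √(u(s)/s + u'(s))` is summable on `(0,T)`. -/
def VisibilityV12 (u u' : ℝ → ℝ) (T : ℝ) : Prop :=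
  0 < T ∧ u 0 = 0 ∧ u' 0 = 0 ∧
  ContinuousOn u (Ico 0 T) ∧ ContinuousOn u' (Ico 0 T) ∧
  (∀ t ∈ Ioo (0:ℝ) T, HasDerivAt u (u' t) t) ∧
  (∀ t ∈ Ico (0:ℝ) T, 0 ≤ u' t ∧ u' t ≤ 1/2) ∧
  MeasureTheory.IntegrableOn
    (fun t => t⁻¹ * sSup ((fun s => Real.sqrt (u s / s + u' s)) '' Ioc (0:ℝ) t))
    (Ioo (0:ℝ) T) volume

/-- The point `U_t = −u(t)·e_{n+1}` (resp. `V_r = −v(r)·e_{n+1}`). -/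
def vertexPt {n : ℕ} (u : ℝ → ℝ) (t : ℝ) : Eucl (n+1) := snocE (0 : Eucl n) (-(u t))

/-- Condition (V3): for all `0 < t < T`, the segment joining `U_t = −u(t)eₙ` with any
point of `∂Ω ∩ B_t` does not intersect `Ω`. -/
def VisibilityV3 {n : ℕ} (Ω : Set (Eucl (n+1))) (u : ℝ → ℝ) (T : ℝ) : Prop :=
  ∀ t ∈ Ioo (0:ℝ) T, ∀ x ∈ frontier Ω ∩ ball (0 : Eucl (n+1)) t,
    Disjoint (segment ℝ (vertexPt u t) x) Ω

/-- Off-centric condition (V3'): for all `0 < r < R`, any segment joining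
`V_r = −v(r)eₙ` with a point of `∂Ω ∩ B_r(V_r)` does not intersect `Ω`. -/
def VisibilityV3' {n : ℕ} (Ω : Set (Eucl (n+1))) (v : ℝ → ℝ) (R : ℝ) : Prop :=
  ∀ r ∈ Ioo (0:ℝ) R, ∀ x ∈ frontier Ω ∩ ball (vertexPt v r : Eucl (n+1)) r,
    Disjoint (segment ℝ (vertexPt v r) x) Ω

/-- The visibility property at `0` (centered form). -/
def Visibility {n : ℕ} (Ω : Set (Eucl (n+1))) (u u' : ℝ → ℝ) (T : ℝ) : Prop :=
  VisibilityV12 u u' T ∧ VisibilityV3 Ω u T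

/-- The visibility property at `0` (off-centric form). -/
def Visibility' {n : ℕ} (Ω : Set (Eucl (n+1))) (v v' : ℝ → ℝ) (R : ℝ) : Prop :=
  VisibilityV12 v v' R ∧ VisibilityV3' Ω v R

/-- Local graphical representation of `∂Ω` near `0 ∈ ∂Ω` in the cylinder
`B'_ρ × (−3m, 3m)` as the epigraph of `ω`. -/
def GraphRep {n : ℕ} (Ω : Set (Eucl (n+1))) (ω : Eucl n → ℝ) (ρ m : ℝ) : Prop :=
  Ω ∩ {x : Eucl (n+1) | ‖initE x‖ < ρ ∧ |lastE x| < 3*m} =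
    {x : Eucl (n+1) | ‖initE x‖ < ρ ∧ ω (initE x) < lastE x ∧ lastE x < 3*m}


theorem AbsolutelyContinuousOnInterval.le_of_ae_deriv_nonpos {f : ℝ → ℝ} {a b : ℝ}
    (hab : a ≤ b) (hf : AbsolutelyContinuousOnInterval f a b)
    (hf' : ∀ᵐ x, x ∈ Ioo a b → deriv f x ≤ 0) : f b ≤ f a := by
  rw [← sub_nonpos, ← hf.integral_deriv_eq_sub, ← neg_nonneg, ← intervalIntegral.integral_neg]
  refine intervalIntegral.integral_nonneg_of_ae_restrict hab ?_
  rw [EventuallyLE, ← Measure.restrict_congr_set Ioo_ae_eq_Icc, ae_restrict_iff' measurableSet_Ioo]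
  filter_upwards [hf'] with x hx hxI using neg_nonneg.2 (hx hxI)

theorem IsOpen.subset_of_ae_mem {X : Type*} [TopologicalSpace X] [MeasurableSpace X]
    {μ : Measure X} [μ.IsOpenPosMeasure] {U F : Set X} (hU : IsOpen U) (hF : IsClosed F)
    (h : ∀ᵐ x ∂μ, x ∈ U → x ∈ F) : U ⊆ F := by
  refine sdiff_eq_empty.1 ((hU.sdiff hF).eq_empty_of_measure_zero (μ := μ) ?_)
  rw [measure_eq_zero_iff_ae_notMem]
  filter_upwards [h] with x hx ⟨hxU, hxF⟩ using hxF (hx hxU)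

theorem ae_ae_smul_of_ae {E : Type*} [NormedAddCommGroup E] [NormedSpace ℝ E]
    [MeasurableSpace E] [BorelSpace E] [FiniteDimensional ℝ E] (μ : Measure E)
    [μ.IsAddHaarMeasure] {p : E → Prop} (hp : ∀ᵐ x ∂μ, p x) :
    ∀ᵐ x ∂μ, ∀ᵐ σ : ℝ, σ ≠ 0 → p (σ • x) := by
  obtain ⟨s, hae, hs, hsp⟩ := hp.exists_measurable_mem
  have hmeas : MeasurableSet {z : E × ℝ | z.2 ≠ 0 → z.2 • z.1 ∈ s} := by
    measurability
  have hswap : ∀ᵐ σ : ℝ, ∀ᵐ x ∂μ, σ ≠ 0 → σ • x ∈ s := ae_of_all _ fun σ => by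
    by_cases hσ : σ = 0
    · simp [hσ]
    · exact ((Measure.quasiMeasurePreserving_smul μ hσ).ae hae).mono fun x hx _ => hx
  filter_upwards [(Measure.ae_ae_comm hmeas).2 hswap] with x hx
  filter_upwards [hx] with σ hσ h0 using hsp _ (hσ h0)

theorem LipschitzWith.mul_add_le_of_ae_fderiv_self_le {E : Type*} [NormedAddCommGroup E]
    [NormedSpace ℝ E] {ω : E → ℝ} {L : ℝ≥0} (hω : LipschitzWith L ω) {x : E} {c : ℝ}
    (h : ∀ᵐ σ : ℝ, σ ∈ Ioo 0 1 →
      DifferentiableAt ℝ ω (σ • x) ∧ fderiv ℝ ω (σ • x) (σ • x) ≤ ω (σ • x) + c) :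
    ∀ s ∈ Icc (0 : ℝ) 1, s * (ω x + c) ≤ ω (s • x) + c := by
  have hray : LipschitzWith _ (fun σ : ℝ => ω (σ • x)) :=
    hω.comp (ContinuousLinearMap.toSpanSingleton ℝ x).lipschitz
  have hpos : ∀ s ∈ Ioc (0 : ℝ) 1, s * (ω x + c) ≤ ω (s • x) + c := by
    rintro s ⟨hs0, hs1⟩
    set ψ : ℝ → ℝ := fun σ => (ω (σ • x) + c) * σ⁻¹
    have hψ : AbsolutelyContinuousOnInterval ψ s 1 := by
      refine AbsolutelyContinuousOnInterval.fun_mul ?_ ?_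
      · exact (hray.add (LipschitzWith.const c)).lipschitzOnWith.absolutelyContinuousOnInterval
      · refine (contDiffOn_inv ℝ).mono ?_ |>.absolutelyContinuousOnInterval
        rw [uIcc_of_le hs1]
        exact fun σ hσ => (hs0.trans_le hσ.1).ne'
    have hderiv : ∀ᵐ σ, σ ∈ Ioo s 1 → deriv ψ σ ≤ 0 := by
      filter_upwards [h] with σ hσ hσs
      have hσ0 : 0 < σ := hs0.trans hσs.1
      obtain ⟨hdiff, hle⟩ := hσ ⟨hσ0, hσs.2⟩
      have hline : HasDerivAt (fun σ : ℝ => σ • x) x σ := by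
        simpa using (hasDerivAt_id σ).smul_const x
      have hψ' : HasDerivAt ψ ((σ * fderiv ℝ ω (σ • x) x - (ω (σ • x) + c)) / σ ^ 2) σ := by
        refine (((hdiff.hasFDerivAt.comp_hasDerivAt σ hline).add_const c).mul
          (hasDerivAt_inv hσ0.ne')).congr_deriv ?_
        simp only [Function.comp_apply]
        field_simp
        ring
      rw [map_smul, smul_eq_mul] at hle
      rw [hψ'.deriv]
      exact div_nonpos_of_nonpos_of_nonneg (by linarith) (sq_nonneg σ)
    have := hψ.le_of_ae_deriv_nonpos hs1 hderiv
    simp only [ψ, one_smul, inv_one, mul_one] at this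
    rw [mul_comm]
    exact (le_mul_inv_iff₀ hs0).1 this
  have hclosed : IsClosed {s : ℝ | s * (ω x + c) ≤ ω (s • x) + c} :=
    isClosed_le (by fun_prop) ((hray.continuous).add continuous_const)
  rw [← closure_Ioc zero_ne_one]
  exact closure_minimal hpos hclosed

theorem LipschitzWith.mul_add_le_of_ae_inner_gradient_le {E : Type*} [NormedAddCommGroup E]
    [InnerProductSpace ℝ E] [FiniteDimensional ℝ E] [MeasurableSpace E] [BorelSpace E]
    (μ : Measure E) [μ.IsAddHaarMeasure] {ω : E → ℝ} {L : ℝ≥0} (hω : LipschitzWith L ω)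
    {r c : ℝ} (h : ∀ᵐ y ∂μ, ‖y‖ < r → DifferentiableAt ℝ ω y ∧ ⟪y, gradient ω y⟫ ≤ ω y + c)
    {x : E} (hx : ‖x‖ < r) : ∀ s ∈ Icc (0 : ℝ) 1, s * (ω x + c) ≤ ω (s • x) + c := by
  have hclosed : IsClosed {x : E | ∀ s ∈ Icc (0 : ℝ) 1, s * (ω x + c) ≤ ω (s • x) + c} := by
    have := hω.continuous
    simp only [ofPred_forall]
    exact isClosed_biInter fun s _ => isClosed_le (by fun_prop) (by fun_prop)
  refine isOpen_ball.subset_of_ae_mem (μ := μ) hclosed ?_ (mem_ball_zero_iff.2 hx)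
  filter_upwards [ae_ae_smul_of_ae μ h] with y hy hyr
  refine hω.mul_add_le_of_ae_fderiv_self_le ?_
  filter_upwards [hy] with σ hσ hσI
  have hσy : ‖σ • y‖ < r := by
    rw [norm_smul, Real.norm_of_nonneg hσI.1.le]
    exact (mul_le_of_le_one_left (norm_nonneg y) hσI.2.le).trans_lt (mem_ball_zero_iff.1 hyr)
  obtain ⟨hdiff, hle⟩ := hσ hσI.1.ne' hσy
  rw [real_inner_comm, inner_gradient_left] at hle
  exact ⟨hdiff, hle⟩

section
variable {n : ℕ}

@[simp] lemma initE_apply (x : Eucl (n+1)) (i : Fin n) : initE x i = x i.castSucc := rfl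

@[simp] lemma initE_snocE (x' : Eucl n) (t : ℝ) : initE (snocE x' t) = x' := by
  ext i
  simp [snocE]

@[simp] lemma lastE_snocE (x' : Eucl n) (t : ℝ) : lastE (snocE x' t) = t := by
  simp [lastE, snocE]

lemma initE_add_smul (a b : ℝ) (x y : Eucl (n+1)) :
    initE (a • x + b • y) = a • initE x + b • initE y := by
  ext i
  simp

lemma lastE_add_smul (a b : ℝ) (x y : Eucl (n+1)) :
    lastE (a • x + b • y) = a * lastE x + b * lastE y := rfl

lemma norm_sq_eq_norm_initE_sq_add_lastE_sq (x : Eucl (n+1)) :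
    ‖x‖ ^ 2 = ‖initE x‖ ^ 2 + lastE x ^ 2 := by
  simp [EuclideanSpace.norm_sq_eq, Fin.sum_univ_castSucc, lastE]

lemma norm_initE_le (x : Eucl (n+1)) : ‖initE x‖ ≤ ‖x‖ :=
  (sq_le_sq₀ (norm_nonneg _) (norm_nonneg _)).1 <| by
    nlinarith [norm_sq_eq_norm_initE_sq_add_lastE_sq x, sq_nonneg (lastE x)]

lemma abs_lastE_le (x : Eucl (n+1)) : |lastE x| ≤ ‖x‖ :=
  abs_le_of_sq_le_sq (by nlinarith [norm_sq_eq_norm_initE_sq_add_lastE_sq x, sq_nonneg ‖initE x‖])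
    (norm_nonneg _)

lemma norm_snocE_zero (t : ℝ) : ‖snocE (0 : Eucl n) t‖ = |t| := by
  rw [← sq_eq_sq₀ (norm_nonneg _) (abs_nonneg _), sq_abs,
    norm_sq_eq_norm_initE_sq_add_lastE_sq]
  simp

@[fun_prop] lemma continuous_initE : Continuous (initE (n := n)) := by
  unfold initE; fun_prop

@[fun_prop] lemma continuous_lastE : Continuous (lastE (n := n)) := by
  unfold lastE; fun_prop

end

namespace GraphRep

variable {n : ℕ} {Ω : Set (Eucl (n+1))} {ω : Eucl n → ℝ} {ρ m : ℝ}

lemma mem_iff (h : GraphRep Ω ω ρ m) {y : Eucl (n+1)} (hy₁ : ‖initE y‖ < ρ)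
    (hy₂ : |lastE y| < 3 * m) : y ∈ Ω ↔ ω (initE y) < lastE y := by
  simpa only [mem_inter_iff, mem_ofPred_eq, hy₁, hy₂, (abs_lt.1 hy₂).2, and_true, true_and]
    using Set.ext_iff.1 h y

lemma lastE_eq_of_mem_frontier (h : GraphRep Ω ω ρ m) (hΩ : IsOpen Ω) (hω : Continuous ω)
    {x : Eucl (n+1)} (hx : x ∈ frontier Ω) (hx₁ : ‖initE x‖ < ρ) (hx₂ : |lastE x| < 3 * m) :
    lastE x = ω (initE x) := by
  set C : Set (Eucl (n+1)) := {y | ‖initE y‖ < ρ ∧ |lastE y| < 3 * m}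
  have hC : IsOpen C :=
    (isOpen_lt (by fun_prop : Continuous fun y : Eucl (n+1) => ‖initE y‖) continuous_const).inter
      (isOpen_lt (by fun_prop : Continuous fun y : Eucl (n+1) => |lastE y|) continuous_const)
  have hepi : IsClosed {y : Eucl (n+1) | ω (initE y) ≤ lastE y} :=
    isClosed_le (by fun_prop) (by fun_prop)
  have hle : ω (initE x) ≤ lastE x := by
    refine closure_minimal (fun y hy => ?_) hepi (hC.inter_closure ⟨⟨hx₁, hx₂⟩, hx.1⟩)
    exact ((h.mem_iff hy.1.1 hy.1.2).1 hy.2).le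
  refine le_antisymm (not_lt.1 fun hlt => ?_) hle
  exact ((hΩ.frontier_eq ▸ hx).2) ((h.mem_iff hx₁ hx₂).2 hlt)

lemma disjoint_segment_snocE (h : GraphRep Ω ω ρ m) (hΩ : IsOpen Ω) (hω : Continuous ω)
    {t c : ℝ} (htρ : t ≤ ρ) (htm : t ≤ m) (hc : |c| < t)
    (hchord : ∀ x' : Eucl n, ‖x'‖ < t → ∀ s ∈ Icc (0 : ℝ) 1, s * (ω x' + c) ≤ ω (s • x') + c)
    {x : Eucl (n+1)} (hx : x ∈ frontier Ω ∩ ball 0 t) :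
    Disjoint (segment ℝ (snocE 0 (-c)) x) Ω := by
  obtain ⟨hxΩ, hxt⟩ := hx
  have hsub : segment ℝ (snocE 0 (-c)) x ⊆ ball 0 t :=
    (convex_ball 0 t).segment_subset (by rwa [mem_ball_zero_iff, norm_snocE_zero, abs_neg]) hxt
  have hcyl : ∀ y ∈ ball (0 : Eucl (n+1)) t, ‖initE y‖ < ρ ∧ |lastE y| < 3 * m := by
    intro y hy
    rw [mem_ball_zero_iff] at hy
    exact ⟨by linarith [norm_initE_le y], by linarith [abs_lastE_le y, abs_nonneg c]⟩
  have hgraph := h.lastE_eq_of_mem_frontier hΩ hω hxΩ (hcyl x hxt).1 (hcyl x hxt).2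
  rw [Set.disjoint_left]
  rintro _ hp hpΩ
  obtain ⟨h₁, h₂⟩ := hcyl _ (hsub hp)
  obtain ⟨a, b, ha, hb, hab, rfl⟩ := hp
  rw [h.mem_iff h₁ h₂, initE_add_smul, lastE_add_smul, initE_snocE, lastE_snocE, smul_zero,
    zero_add, hgraph] at hpΩ
  have := hchord (initE x) ((norm_initE_le x).trans_lt (mem_ball_zero_iff.1 hxt)) b
    ⟨hb, by linarith⟩
  obtain rfl : a = 1 - b := by linarith
  linarith

end GraphRep

namespace VisibilityV12

variable {u u' : ℝ → ℝ} {T : ℝ}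

lemma mono (h : VisibilityV12 u u' T) {T' : ℝ} (hT' : 0 < T') (hT'T : T' ≤ T) :
    VisibilityV12 u u' T' := by
  obtain ⟨-, hu0, hu'0, hu, hu', hderiv, hbound, hint⟩ := h
  have hIco : Ico 0 T' ⊆ Ico 0 T := Ico_subset_Ico_right hT'T
  have hIoo : Ioo 0 T' ⊆ Ioo 0 T := Ioo_subset_Ioo_right hT'T
  exact ⟨hT', hu0, hu'0, hu.mono hIco, hu'.mono hIco, fun t ht => hderiv t (hIoo ht),
    fun t ht => hbound t (hIco ht), hint.mono_set hIoo⟩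

lemma monotoneOn (h : VisibilityV12 u u' T) : MonotoneOn u (Ico 0 T) := by
  obtain ⟨-, -, -, hu, -, hderiv, hbound, -⟩ := h
  refine monotoneOn_of_hasDerivWithinAt_nonneg (f' := u') (convex_Ico 0 T) hu
    (fun t ht => ?_) (fun t ht => ?_) <;> rw [interior_Ico] at ht
  · exact (hderiv t ht).hasDerivWithinAt
  · exact (hbound t (Ioo_subset_Ico_self ht)).1

lemma le_half (h : VisibilityV12 u u' T) {t : ℝ} (ht : t ∈ Ico 0 T) : u t ≤ t / 2 := by
  obtain ⟨hT, hu0, -, hu, -, hderiv, hbound, -⟩ := h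
  have : MonotoneOn (fun s => s / 2 - u s) (Ico 0 T) := by
    refine monotoneOn_of_hasDerivWithinAt_nonneg (f' := fun s => 1 / 2 - u' s) (convex_Ico 0 T)
      (by fun_prop) (fun s hs => ?_) (fun s hs => ?_) <;> rw [interior_Ico] at hs
    · exact (((hasDerivAt_id s).div_const 2).sub (hderiv s hs)).hasDerivWithinAt
    · linarith [(hbound s (Ioo_subset_Ico_self hs)).2]
  have := this ⟨le_rfl, hT⟩ ht ht.1
  simp only [hu0] at this
  linarith

lemma abs_lt_self (h : VisibilityV12 u u' T) {t : ℝ} (ht : t ∈ Ioo 0 T) : |u t| < t := by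
  have hu0 : u 0 = 0 := h.2.1
  have := h.monotoneOn ⟨le_rfl, h.1⟩ (Ioo_subset_Ico_self ht) ht.1.le
  exact abs_lt.2 ⟨by linarith [ht.1], by linarith [h.le_half (Ioo_subset_Ico_self ht), ht.1]⟩

end VisibilityV12

theorem visibility_of_gradient_bound {n : ℕ}
    (Ω : Set (Eucl (n+1))) (hΩ : IsOpen Ω)
    (ρ m : ℝ) (hρ : 0 < ρ) (hm : 0 < m)
    (ω : Eucl n → ℝ) (L : ℝ≥0) (hωLip : LipschitzWith L ω)
    (hrep : GraphRep Ω ω ρ m)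
    (T : ℝ) (u u' : ℝ → ℝ)
    (hV12 : VisibilityV12 u u' T)
    (hgrad : ∀ᵐ x' ∂(volume : Measure (Eucl n)),
      ‖x'‖ < ρ → ‖x'‖ < T → DifferentiableAt ℝ ω x' →
        ⟪x', gradient ω x'⟫ ≤ ω x' + u ‖x'‖) :
    ∃ (T' : ℝ) (u₁ u₁' : ℝ → ℝ), Visibility Ω u₁ u₁' T' := by
  refine ⟨min T (min ρ m), u, u', hV12.mono (lt_min hV12.1 (lt_min hρ hm)) (min_le_left _ _), ?_⟩
  rintro t ⟨ht0, ht⟩ x hx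
  simp only [lt_min_iff] at ht
  obtain ⟨htT, htρ, htm⟩ := ht
  have hgrad_t : ∀ᵐ y ∂(volume : Measure (Eucl n)),
      ‖y‖ < t → DifferentiableAt ℝ ω y ∧ ⟪y, gradient ω y⟫ ≤ ω y + u t := by
    filter_upwards [hgrad, hωLip.ae_differentiableAt] with y hy hdiff hyt
    refine ⟨hdiff, (hy (hyt.trans htρ) (hyt.trans htT) hdiff).trans ?_⟩
    gcongr
    exact hV12.monotoneOn ⟨norm_nonneg y, hyt.trans htT⟩ ⟨ht0.le, htT⟩ hyt.le
  exact hrep.disjoint_segment_snocE hΩ hωLip.continuous htρ.le htm.le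
    (hV12.abs_lt_self ⟨ht0, htT⟩)
    (fun x' hx' => hωLip.mul_add_le_of_ae_inner_gradient_le volume hgrad_t hx') hx
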